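/- Fix μ > 0, p > 0, W > 0, N₀ > 0, and let λ > 0. Then the optimal bandwidth a*(g, λ) = (p·g/(W·N₀)) / (−1/W(−exp(−(μ·ln2/(λ·W) + 1))) − 1) is strictly increasing in g for fixed λ, and strictly increasing in λ for fixed g. -/
import Mathlib

private lemma mulexp_strictMono : StrictMonoOn (fun w : ℝ => w * Real.exp w) (Set.Ici (-1)) := by
  apply strictMonoOn_of_deriv_pos (convex_Ici _)
  · exact (continuous_id.mul Real.continuous_exp).continuousOn
  · intro x hx
    rw [interior_Ici] at hx
    have h : HasDerivAt (fun w : ℝ => w * Real.exp w) (1 * Real.exp x + x * Real.exp x) x :=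
      (hasDerivAt_id x).mul (Real.hasDerivAt_exp x)
    rw [h.deriv]
    have : 0 < (1 + x) * Real.exp x :=
      mul_pos (by linarith [Set.mem_Ioi.mp hx]) (Real.exp_pos x)
    nlinarith

/-- The closed-form optimal bandwidth
`a*(g, λ) = (p g/(W_U N₀)) / (-1/W(-exp(-(μ ln 2/(λ W_U) + 1))) - 1)` is strictly
increasing in the channel gain `g` for fixed `λ > 0`, and strictly increasing in the
dual variable `λ` for fixed `g > 0` (`W` the principal Lambert W branch). -/
theorem stmt_8 (W : ℝ → ℝ)
    (hW : ∀ z ∈ Set.Ioo (-(Real.exp 1)⁻¹) (0 : ℝ),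
      W z * Real.exp (W z) = z ∧ -1 ≤ W z)
    (μ p WU N₀ : ℝ) (hμ : 0 < μ) (hp : 0 < p) (hWU : 0 < WU) (hN₀ : 0 < N₀) :
    let astar : ℝ → ℝ → ℝ := fun g lam =>
      (p * g / (WU * N₀)) /
        (-1 / W (-Real.exp (-(μ * Real.log 2 / (lam * WU) + 1))) - 1)
    (∀ lam : ℝ, 0 < lam → StrictMonoOn (fun g => astar g lam) (Set.Ioi 0)) ∧
    (∀ g : ℝ, 0 < g → StrictMonoOn (fun lam => astar g lam) (Set.Ioi 0)) := by
  intro astar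
  set z : ℝ → ℝ := fun lam => -Real.exp (-(μ * Real.log 2 / (lam * WU) + 1)) with hz
  have hln2 : 0 < Real.log 2 := Real.log_pos (by norm_num)
  -- z lam ∈ Ioo (-(exp 1)⁻¹) 0 for lam > 0
  have hzmem : ∀ lam : ℝ, 0 < lam → z lam ∈ Set.Ioo (-(Real.exp 1)⁻¹) (0 : ℝ) := by
    intro lam hlam
    constructor
    · have hx : 0 < μ * Real.log 2 / (lam * WU) :=
        div_pos (mul_pos hμ hln2) (mul_pos hlam hWU)
      have : Real.exp (-(μ * Real.log 2 / (lam * WU) + 1)) < Real.exp (-1) :=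
        Real.exp_lt_exp.mpr (by linarith)
      have h1 : Real.exp (-1) = (Real.exp 1)⁻¹ := by
        rw [Real.exp_neg]
      simp only [hz]
      rw [← h1]
      linarith
    · simp only [hz, neg_lt, neg_zero]
      exact Real.exp_pos _
  -- basic facts about w := W (z lam)
  have hwfacts : ∀ lam : ℝ, 0 < lam →
      -1 < W (z lam) ∧ W (z lam) < 0 ∧ W (z lam) * Real.exp (W (z lam)) = z lam := by
    intro lam hlam
    obtain ⟨heq, hge⟩ := hW (z lam) (hzmem lam hlam)
    obtain ⟨hlo, hhi⟩ := hzmem lam hlam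
    have hwneg : W (z lam) < 0 := by
      by_contra h
      push_neg at h
      have : 0 ≤ W (z lam) * Real.exp (W (z lam)) :=
        mul_nonneg h (Real.exp_pos _).le
      rw [heq] at this; linarith
    refine ⟨?_, hwneg, heq⟩
    rcases lt_or_eq_of_le hge with h | h
    · exact h
    · exfalso
      rw [← h, Real.exp_neg] at heq
      have : z lam = -(Real.exp 1)⁻¹ := by rw [← heq]; ring
      linarith
  -- positivity of denominator
  have hDpos : ∀ lam : ℝ, 0 < lam → 0 < -1 / W (z lam) - 1 := by
    intro lam hlam
    obtain ⟨h1, h2, _⟩ := hwfacts lam hlam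
    have h3 : 0 < -W (z lam) := by linarith
    have h4 : -W (z lam) < 1 := by linarith
    have := one_lt_one_div h3 h4
    have h5 : 1 / -W (z lam) = -1 / W (z lam) := by
      rw [div_neg, neg_div]
    linarith [h5 ▸ this]
  constructor
  · intro lam hlam a _ b _ hab
    have hD := hDpos lam hlam
    simp only [astar]
    have hnum : p * a / (WU * N₀) < p * b / (WU * N₀) := by
      gcongr
    exact div_lt_div_of_pos_right hnum hD
  · intro g hg l1 hl1 l2 hl2 hl
    simp only [Set.mem_Ioi] at hl1 hl2
    have hD1 := hDpos l1 hl1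
    have hD2 := hDpos l2 hl2
    obtain ⟨hw1a, hw1b, hw1e⟩ := hwfacts l1 hl1
    obtain ⟨hw2a, hw2b, hw2e⟩ := hwfacts l2 hl2
    -- z l1 > z l2
    have hzlt : z l2 < z l1 := by
      have : μ * Real.log 2 / (l2 * WU) < μ * Real.log 2 / (l1 * WU) := by
        apply div_lt_div_of_pos_left (mul_pos hμ hln2) (mul_pos hl1 hWU)
        exact mul_lt_mul_of_pos_right hl hWU
      have := Real.exp_lt_exp.mpr (show -(μ * Real.log 2 / (l1 * WU) + 1)
          < -(μ * Real.log 2 / (l2 * WU) + 1) by linarith)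
      simp only [hz]
      linarith
    -- hence W (z l2) < W (z l1)
    have hwlt : W (z l2) < W (z l1) := by
      have := mulexp_strictMono.lt_iff_lt (Set.mem_Ici.mpr hw2a.le)
        (Set.mem_Ici.mpr hw1a.le)
      apply this.mp
      simp only [hw1e, hw2e]
      exact hzlt
    -- hence D l2 < D l1
    have hDlt : -1 / W (z l2) - 1 < -1 / W (z l1) - 1 := by
      have h1 : 0 < -W (z l1) := by linarith
      have h2 : -W (z l1) < -W (z l2) := by linarith
      have h3 := one_div_lt_one_div_of_lt h1 h2
      have e1 : 1 / -W (z l1) = -1 / W (z l1) := by rw [div_neg, neg_div]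
      have e2 : 1 / -W (z l2) = -1 / W (z l2) := by rw [div_neg, neg_div]
      rw [e1, e2] at h3
      linarith
    simp only [astar]
    exact div_lt_div_of_pos_left (div_pos (mul_pos hp hg) (mul_pos hWU hN₀)) hD2 hDlt
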